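/- Let $\varepsilon, a_\varepsilon > 0$ and let $M$ be a locally finite marked point set in $\mathbb{R}^{N-1} \times (0,\infty)$. For $(y',\rho) \in M$ set $r(y') := \min\{d_M(y')/2, 1\}$ where $d_M(y')$ is the distance to the nearest other point of $M$. Call $(y',\rho)$ a cluster point of type 1 if $2a_\varepsilon \rho \ge \varepsilon r(y')$. Suppose $(y',\rho) \in M$ satisfies $2a_\varepsilon\rho < \varepsilon r(y')$, but there exists $(\tilde{y}',\tilde{\rho}) \in M$ with $\tilde{y}' \neq y'$ such that $B'(\varepsilon\tilde{y}', 2a_\varepsilon\tilde{\rho}) \cap B'(\varepsilon y', \varepsilon r(y')) \neq \emptyset$. Then any such $(\tilde{y}',\tilde{\rho})$ is a cluster point of type 1, and moreover $B'(\varepsilon y', \varepsilon r(y')) \subset B'(\varepsilon\tilde{y}', 6a_\varepsilon\tilde{\rho})$. -/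
import Mathlib
set_option maxHeartbeats 1000000


open MeasureTheory Set Filter Topology

/-- The distance from `y` to its nearest neighbor among the base points of `M`. -/
noncomputable def nearestDist {E : Type*} [MetricSpace E] (M : Set (E × ℝ)) (y : E) : ℝ :=
  sInf { d : ℝ | ∃ p ∈ M, p.1 ≠ y ∧ d = dist y p.1 }

/-- The truncated radius `r(y) := min{d_M(y)/2, 1}`. -/
noncomputable def truncRad {E : Type*} [MetricSpace E] (M : Set (E × ℝ)) (y : E) : ℝ :=
  min (nearestDist M y / 2) 1

lemma truncRad_le_half {E : Type*} [MetricSpace E] (M : Set (E × ℝ)) (y : E)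
    {p : E × ℝ} (hp : p ∈ M) (hne : p.1 ≠ y) :
    truncRad M y ≤ dist y p.1 / 2 := by
  have h1 : nearestDist M y ≤ dist y p.1 := by
    apply csInf_le
    · exact ⟨0, fun d ⟨q, _, _, hd⟩ => hd ▸ dist_nonneg⟩
    · exact ⟨p, hp, hne, rfl⟩
  calc truncRad M y ≤ nearestDist M y / 2 := min_le_left _ _
    _ ≤ dist y p.1 / 2 := by linarith

/-- Cluster-within-cluster lemma: if `(y,ρ)` satisfies `2aρ < ε r(y)` but some other
`(z,σ)` has `B(εz, 2aσ)` meeting `B(εy, ε r(y))`, then `(z,σ)` is a type-1 cluster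
point (`2aσ ≥ ε r(z)`) and `B(εy, ε r(y)) ⊆ B(εz, 6aσ)`. -/
theorem stmt11 (N : ℕ) (M : Set (EuclideanSpace ℝ (Fin (N - 1)) × ℝ))
    (hcount : M.Countable)
    (hpos : ∀ p ∈ M, 0 < p.2)
    (hmark : ∀ p ∈ M, ∀ q ∈ M, p.1 = q.1 → p.2 = q.2)
    (hlf : ∀ B : Set (EuclideanSpace ℝ (Fin (N - 1))), Bornology.IsBounded B →
      {p ∈ M | p.1 ∈ B}.Finite)
    (ε a : ℝ) (hε : 0 < ε) (ha : 0 < a)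
    (y : EuclideanSpace ℝ (Fin (N - 1))) (ρ : ℝ) (hy : (y, ρ) ∈ M)
    (hiso : 2 * a * ρ < ε * truncRad M y)
    (z : EuclideanSpace ℝ (Fin (N - 1))) (σ : ℝ) (hz : (z, σ) ∈ M) (hne : z ≠ y)
    (hint : (Metric.ball (ε • z) (2 * a * σ) ∩
      Metric.ball (ε • y) (ε * truncRad M y)).Nonempty) :
    ε * truncRad M z ≤ 2 * a * σ ∧
      Metric.ball (ε • y) (ε * truncRad M y) ⊆ Metric.ball (ε • z) (6 * a * σ) := by
  obtain ⟨x, hx1, hx2⟩ := hint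
  have hry' := truncRad_le_half M y hz hne
  have hry : truncRad M y ≤ dist y z / 2 := hry'
  have hrz' := truncRad_le_half M z hy (fun h : (y, ρ).1 = z => hne h.symm)
  have hrz : truncRad M z ≤ dist z y / 2 := hrz'
  have hd : dist (ε • y) (ε • z) = ε * dist y z := by
    rw [dist_smul₀, Real.norm_eq_abs, abs_of_pos hε]
  have htri : dist (ε • y) (ε • z) < 2 * a * σ + ε * truncRad M y :=
    calc dist (ε • y) (ε • z) ≤ dist (ε • y) x + dist x (ε • z) := dist_triangle _ _ _
      _ < ε * truncRad M y + 2 * a * σ := by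
          rw [Metric.mem_ball] at hx1 hx2
          exact add_lt_add (by rwa [dist_comm]) hx1
      _ = 2 * a * σ + ε * truncRad M y := by ring
  have hdyz : ε * dist y z < 2 * a * σ + ε * (dist y z / 2) := by
    calc ε * dist y z = dist (ε • y) (ε • z) := hd.symm
      _ < 2 * a * σ + ε * truncRad M y := htri
      _ ≤ 2 * a * σ + ε * (dist y z / 2) := by nlinarith
  have key : ε * dist y z < 4 * a * σ := by nlinarith
  constructor
  · rw [dist_comm] at hrz
    nlinarith
  · intro w hw
    rw [Metric.mem_ball] at hw ⊢
    calc dist w (ε • z) ≤ dist w (ε • y) + dist (ε • y) (ε • z) := dist_triangle _ _ _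
      _ < ε * truncRad M y + ε * dist y z := add_lt_add_of_lt_of_le hw (le_of_eq hd)
      _ ≤ ε * (dist y z / 2) + ε * dist y z := by nlinarith
      _ < 6 * a * σ := by nlinarith
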